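/- Let p ∈ (1/2, 1), σ, τ > 0 with σ ≠ τ, and ε ∈ (0, 1/2]. There exists a constant C > 0, depending only on m₄, σ, τ, ε and p, such that for every d ≥ 1, every z ∈ ℝ^d with ‖z‖₂ ≤ ε, and every k with 0 ≤ k ≤ σ²η/√(d(1−p)), one has ℙ(‖τδ + z‖₂²/d ∈ [σ² − k, σ² + k]) ≤ C/d. -/

import Mathlib

/-!
The sum `S = ‖τδ + z‖²` has mean `dτ² + ‖z‖²` and, its terms being independent with finite
second moment (this is where the fourth moment of `μ` enters), variance `O(d)`. For `d` large,
`k = O(d^{-1/2})` and `‖z‖ ≤ ε` put the annulus `d[σ² - k, σ² + k]` at distance at least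
`d|σ² - τ²|/2` from that mean, so Chebyshev's inequality bounds its probability by
`O(d) / d² = O(1/d)`. Small `d` are covered by the trivial bound `1 ≤ C/d`.
-/

open MeasureTheory ProbabilityTheory

lemma add_pow_four_le (x y : ℝ) : (x + y) ^ 4 ≤ 8 * (x ^ 4 + y ^ 4) := by
  nlinarith [sq_nonneg (x - y), sq_nonneg (x + y), sq_nonneg (x ^ 2 - y ^ 2)]

section AffineSquare

variable {μ : Measure ℝ} [IsProbabilityMeasure μ] (a b : ℝ)

lemma integral_affine_sq (hmean : ∫ t, t ∂μ = 0) (hvar : ∫ t, t ^ 2 ∂μ = 1) :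
    ∫ t, (a * t + b) ^ 2 ∂μ = a ^ 2 + b ^ 2 := by
  have hsq : Integrable (fun t : ℝ => t ^ 2) μ := .of_integral_ne_zero (by simp [hvar])
  have hid : Integrable (fun t : ℝ => t) μ :=
    ((memLp_two_iff_integrable_sq aestronglyMeasurable_id).2 hsq).integrable one_le_two
  have hexp : (fun t => (a * t + b) ^ 2) = fun t => a ^ 2 * t ^ 2 + 2 * a * b * t + b ^ 2 := by
    ext t; ring
  have hlin : Integrable (fun t => a ^ 2 * t ^ 2 + 2 * a * b * t) μ :=
    (hsq.const_mul _).add (hid.const_mul _)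
  rw [hexp, integral_add hlin (integrable_const _), integral_add (hsq.const_mul _)
    (hid.const_mul _), integral_const_mul, integral_const_mul, hvar, hmean]
  simp

lemma integrable_affine_pow_four (hint : Integrable (fun t : ℝ => t ^ 4) μ) :
    Integrable (fun t => (a * t + b) ^ 4) μ := by
  refine (((hint.const_mul (a ^ 4)).add (integrable_const (b ^ 4))).const_mul 8).mono'
    (by fun_prop) (.of_forall fun t => ?_)
  rw [Real.norm_of_nonneg (by positivity)]
  simpa [mul_pow] using add_pow_four_le (a * t) b

lemma memLp_affine_sq (hint : Integrable (fun t : ℝ => t ^ 4) μ) :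
    MemLp (fun t => (a * t + b) ^ 2) 2 μ := by
  refine (memLp_two_iff_integrable_sq (by fun_prop)).2 ?_
  simpa [← pow_mul] using integrable_affine_pow_four a b hint

lemma variance_affine_sq_le (hint : Integrable (fun t : ℝ => t ^ 4) μ) :
    Var[fun t => (a * t + b) ^ 2; μ] ≤ 8 * (a ^ 4 * ∫ t, t ^ 4 ∂μ + b ^ 4) := by
  calc Var[fun t => (a * t + b) ^ 2; μ] ≤ ∫ t, ((a * t + b) ^ 2) ^ 2 ∂μ :=
        variance_le_expectation_sq (by fun_prop)
    _ = ∫ t, (a * t + b) ^ 4 ∂μ := by simp_rw [← pow_mul]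
    _ ≤ ∫ t, 8 * (a ^ 4 * t ^ 4 + b ^ 4) ∂μ :=
        integral_mono (integrable_affine_pow_four a b hint)
          (((hint.const_mul _).add (integrable_const _)).const_mul 8)
          fun t => by simpa [mul_pow] using add_pow_four_le (a * t) b
    _ = 8 * (a ^ 4 * ∫ t, t ^ 4 ∂μ + b ^ 4) := by
        rw [integral_const_mul, integral_add (hint.const_mul _) (integrable_const _),
          integral_const_mul]
        simp

lemma sum_variance_affine_sq_le {ι : Type*} [Fintype ι] (hint : Integrable (fun t : ℝ => t ^ 4) μ)
    (b : ι → ℝ) {ε : ℝ} (hb : ∑ i, b i ^ 2 ≤ ε ^ 2) :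
    ∑ i, Var[fun t => (a * t + b i) ^ 2; μ]
      ≤ Fintype.card ι * (8 * (a ^ 4 * ∫ t, t ^ 4 ∂μ + ε ^ 4)) := by
  calc _ ≤ ∑ _i : ι, 8 * (a ^ 4 * ∫ t, t ^ 4 ∂μ + ε ^ 4) := Finset.sum_le_sum fun i _ => by
        have hbi : b i ^ 2 ≤ ε ^ 2 :=
          (Finset.single_le_sum (fun j _ => sq_nonneg (b j)) (Finset.mem_univ i)).trans hb
        have hbi4 : b i ^ 4 ≤ ε ^ 4 := by
          simpa [← pow_mul] using pow_le_pow_left₀ (sq_nonneg _) hbi 2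
        linarith [variance_affine_sq_le a (b i) hint]
    _ = _ := by simp

end AffineSquare

lemma meas_le_abs_sub_sum_pi_le {ι : Type*} [Fintype ι] {Ω : ι → Type*}
    [∀ i, MeasurableSpace (Ω i)] (μ : ∀ i, Measure (Ω i)) [∀ i, IsProbabilityMeasure (μ i)]
    {f : ∀ i, Ω i → ℝ} (hf : ∀ i, MemLp (f i) 2 (μ i)) {c : ℝ} (hc : 0 < c) :
    Measure.pi μ {x | c ≤ |∑ i, f i (x i) - ∑ i, ∫ t, f i t ∂μ i|}
      ≤ ENNReal.ofReal ((∑ i, Var[f i; μ i]) / c ^ 2) := by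
  have hX : ∀ i, MemLp (fun x : ∀ i, Ω i => f i (x i)) 2 (Measure.pi μ) :=
    fun i => (hf i).comp_measurePreserving (measurePreserving_eval _ i)
  have hmean : (Measure.pi μ)[∑ i, fun x : ∀ i, Ω i => f i (x i)] = ∑ i, ∫ t, f i t ∂μ i := by
    simp only [Finset.sum_apply]
    rw [integral_finsetSum _ fun i _ => (hX i).integrable one_le_two]
    exact Finset.sum_congr rfl fun i _ => integral_comp_eval (hf i).aestronglyMeasurable
  rw [← variance_sum_pi hf, ← hmean]
  convert meas_ge_le_variance_div_sq (memLp_finsetSum' _ fun i _ => hX i) hc using 4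
  simp [Finset.sum_apply]

lemma abs_sub_ge_of_div_mem_Icc {S d s t k w : ℝ} (hd : 0 < d)
    (hS : S / d ∈ Set.Icc (s - k) (s + k)) (hw : 0 ≤ w) (hk : 4 * k ≤ |s - t|)
    (hwd : 4 * w ≤ d * |s - t|) :
    d * |s - t| / 2 ≤ |S - (d * t + w)| := by
  rw [Set.mem_Icc, le_div_iff₀ hd, div_le_iff₀ hd] at hS
  have hdk := mul_le_mul_of_nonneg_left hk hd.le
  rcases abs_cases (s - t) with ⟨h, _⟩ | ⟨h, _⟩ <;> rw [h] at hwd hdk ⊢ <;> rw [le_abs]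
  · left; nlinarith
  · right; nlinarith

lemma four_mul_le_of_le_div_sqrt_mul {k c d q Δ : ℝ} (hd : 0 < d) (hΔ : 0 < Δ)
    (hk : k ≤ c / √(d * q)) (hdΔ : (4 * (c / √q) / Δ) ^ 2 ≤ d) : 4 * k ≤ Δ := by
  have hsd : 0 < √d := Real.sqrt_pos.2 hd
  rw [Real.sqrt_mul hd.le, div_mul_eq_div_div_swap] at hk
  have h := (le_abs_self _).trans (Real.abs_le_sqrt hdΔ)
  rw [div_le_iff₀ hΔ] at h
  calc 4 * k ≤ 4 * (c / √q) / √d := by rw [mul_div_assoc]; linarith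
    _ ≤ Δ := by rw [div_le_iff₀ hsd]; linarith

lemma pi_measure_sum_affine_sq_div_mem_Icc_le {μ : Measure ℝ} [IsProbabilityMeasure μ]
    (hmean : ∫ t, t ∂μ = 0) (hvar : ∫ t, t ^ 2 ∂μ = 1) (hint : Integrable (fun t : ℝ => t ^ 4) μ)
    {d : ℕ} (hd : 0 < d) (a s k : ℝ) (z : Fin d → ℝ) (hΔ : 0 < |s - a ^ 2|)
    (hk : 4 * k ≤ |s - a ^ 2|) (hz : 4 * ∑ i, z i ^ 2 ≤ d * |s - a ^ 2|) :
    (Measure.pi fun _ : Fin d => μ)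
        {δ | (∑ i, (a * δ i + z i) ^ 2) / (d : ℝ) ∈ Set.Icc (s - k) (s + k)}
      ≤ ENNReal.ofReal
          ((∑ i, Var[fun t => (a * t + z i) ^ 2; μ]) / (d * |s - a ^ 2| / 2) ^ 2) := by
  have hd : (0 : ℝ) < d := by exact_mod_cast hd
  have hmeanS : ∑ i, ∫ t, (a * t + z i) ^ 2 ∂μ = d * a ^ 2 + ∑ i, z i ^ 2 := by
    simp [integral_affine_sq _ _ hmean hvar, Finset.sum_add_distrib]
  refine le_trans (measure_mono fun x hx => ?_)
    (meas_le_abs_sub_sum_pi_le _ (fun i => memLp_affine_sq a (z i) hint) (by positivity))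
  rw [Set.mem_ofPred_eq, hmeanS]
  exact abs_sub_ge_of_div_mem_Icc hd hx (by positivity) hk hz

theorem annulus_probability_decay_general
    (μ : Measure ℝ) [IsProbabilityMeasure μ]
    (hmean : ∫ t, t ∂μ = 0) (hvar : ∫ t, t ^ 2 ∂μ = 1)
    (hint : Integrable (fun t : ℝ => t ^ 4) μ)
    (m₄ : ℝ)
    (p σ τ ε : ℝ)
    (hσ : 0 < σ) (hτ : 0 < τ) (hστ : σ ≠ τ) :
    ∃ C : ℝ, 0 < C ∧ ∀ d : ℕ, 1 ≤ d → ∀ z : Fin d → ℝ,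
      Real.sqrt (∑ i, (z i) ^ 2) ≤ ε →
      ∀ k : ℝ, 0 ≤ k → k ≤ σ ^ 2 * Real.sqrt (m₄ - 1) / Real.sqrt ((d : ℝ) * (1 - p)) →
      (Measure.pi fun _ : Fin d => μ)
        {δ | (∑ i, (τ * δ i + z i) ^ 2) / (d : ℝ) ∈ Set.Icc (σ ^ 2 - k) (σ ^ 2 + k)}
        ≤ ENNReal.ofReal (C / (d : ℝ)) := by
  set Δ := |σ ^ 2 - τ ^ 2|
  have hΔ : 0 < Δ := abs_pos.2 <| sub_ne_zero.2 fun h =>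
    hστ ((pow_left_inj₀ hσ.le hτ.le two_ne_zero).1 h)
  set V := 8 * (τ ^ 4 * ∫ t, t ^ 4 ∂μ + ε ^ 4)
  set D₀ := (4 * (σ ^ 2 * √(m₄ - 1) / √(1 - p)) / Δ) ^ 2 + 4 * ε ^ 2 / Δ
  refine ⟨max D₀ (4 * V / Δ ^ 2) + 1, by positivity, fun d hd z hz k _ hk => ?_⟩
  have hd' : (0 : ℝ) < d := by exact_mod_cast hd
  have hzε : ∑ i, z i ^ 2 ≤ ε ^ 2 := (Real.sqrt_le_iff.1 hz).2
  rcases lt_or_ge (d : ℝ) D₀ with hsmall | hlarge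
  · refine prob_le_one.trans (ENNReal.one_le_ofReal.2 ?_)
    rw [le_div_iff₀ hd']
    linarith [le_max_left D₀ (4 * V / Δ ^ 2)]
  have hkΔ : 4 * k ≤ Δ := four_mul_le_of_le_div_sqrt_mul hd' hΔ hk (by
    linarith [show 0 ≤ 4 * ε ^ 2 / Δ by positivity])
  have hzΔ : 4 * ∑ i, z i ^ 2 ≤ d * Δ := by
    have : 4 * ε ^ 2 / Δ ≤ d := by linarith [sq_nonneg (4 * (σ ^ 2 * √(m₄ - 1) / √(1 - p)) / Δ)]
    rw [div_le_iff₀ hΔ] at this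
    linarith
  refine (pi_measure_sum_affine_sq_div_mem_Icc_le hmean hvar hint hd τ _ k z hΔ hkΔ hzΔ).trans
    (ENNReal.ofReal_le_ofReal ?_)
  calc _ ≤ d * V / (d * Δ / 2) ^ 2 := by
        gcongr
        simpa using sum_variance_affine_sq_le τ hint z hzε
    _ = 4 * V / Δ ^ 2 / d := by field_simp; ring
    _ ≤ _ := by gcongr; linarith [le_max_right D₀ (4 * V / Δ ^ 2)]

/-- Lemma 3 with the explicit bound on the annulus half-width `k`. `δ : Fin d → ℝ` has law
`μ^⊗d` with `μ` of zero mean, unit variance and fourth moment `m₄`; `η := √(m₄ − 1)`.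
Let `p ∈ (1/2, 1)`, `σ, τ > 0` with `σ ≠ τ`, `ε ∈ (0, 1/2]`. There is `C > 0`, depending only
on `m₄, σ, τ, ε, p`, such that for every `d ≥ 1`, every `z` with `‖z‖₂ ≤ ε`, and every
`0 ≤ k ≤ σ²η/√(d(1−p))`, one has `ℙ(‖τδ + z‖₂²/d ∈ [σ² − k, σ² + k]) ≤ C/d`. -/
theorem annulus_probability_decay
    (μ : Measure ℝ) [IsProbabilityMeasure μ]
    (hmean : ∫ t, t ∂μ = 0) (hvar : ∫ t, t ^ 2 ∂μ = 1)
    (hint : Integrable (fun t : ℝ => t ^ 4) μ)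
    (m₄ : ℝ) (hm₄ : ∫ t, t ^ 4 ∂μ = m₄)
    (p σ τ ε : ℝ)
    (hp : p ∈ Set.Ioo (1 / 2 : ℝ) 1) (hσ : 0 < σ) (hτ : 0 < τ) (hστ : σ ≠ τ)
    (hε : ε ∈ Set.Ioc (0 : ℝ) (1 / 2)) :
    ∃ C : ℝ, 0 < C ∧ ∀ d : ℕ, 1 ≤ d → ∀ z : Fin d → ℝ,
      Real.sqrt (∑ i, (z i) ^ 2) ≤ ε →
      ∀ k : ℝ, 0 ≤ k → k ≤ σ ^ 2 * Real.sqrt (m₄ - 1) / Real.sqrt ((d : ℝ) * (1 - p)) →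
      (Measure.pi fun _ : Fin d => μ)
        {δ | (∑ i, (τ * δ i + z i) ^ 2) / (d : ℝ) ∈ Set.Icc (σ ^ 2 - k) (σ ^ 2 + k)}
        ≤ ENNReal.ofReal (C / (d : ℝ)) :=
  annulus_probability_decay_general μ hmean hvar hint m₄ p σ τ ε hσ hτ hστ
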